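/- Let p, q ≥ 1 with n = p + q + 1 and λ > 1, and let D_λ be the linear automorphism of ℝ^{p+1} × ℝ^{q+1} that multiplies the first factor by λ and the second factor by λ⁻¹. The ℤ-action on Ω := S^n ∖ (S^p ∪ S^q) defined by m • v := D_λ^m v / ‖D_λ^m v‖ is well-defined, free (m • v = v implies m = 0), and properly discontinuous (for all compact subsets K, L of Ω, the set of m ∈ ℤ with (m • K) ∩ L ≠ ∅ is finite). -/

import Mathlib

/-!
Let `a(v)` and `b(v)` be the squared norms of the `ℝ^{p+1}`- and `ℝ^{q+1}`-components of `v`;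
on `Ω` both are positive. `D_λ^m` multiplies them by `λ^{2m}` and `λ^{-2m}`, and normalizing
multiplies both by the same factor, so `log (a / b)` is a continuous function on `Ω` that the
action of `m` shifts by `4 m log λ`. Freeness follows at once, and since this function is
bounded on compact subsets of `Ω`, only finitely many shifts can carry `K` into `L`.
-/

noncomputable section

open Set

/-- The great `p`-sphere `S^p`. -/
def greatSphereP (n p : ℕ) : Set (EuclideanSpace ℝ (Fin (n + 1))) :=
  {v | ‖v‖ = 1 ∧ ∀ k : Fin (n + 1), p + 1 ≤ (k : ℕ) → v k = 0}

/-- The complementary great `q`-sphere `S^q`. -/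
def greatSphereQ (n p : ℕ) : Set (EuclideanSpace ℝ (Fin (n + 1))) :=
  {v | ‖v‖ = 1 ∧ ∀ k : Fin (n + 1), (k : ℕ) < p + 1 → v k = 0}

/-- `Ω := S^n ∖ (S^p ∪ S^q)` with its subspace topology. -/
def Omega (n p : ℕ) : Set (EuclideanSpace ℝ (Fin (n + 1))) :=
  {v | ‖v‖ = 1} \ (greatSphereP n p ∪ greatSphereQ n p)

/-- `D_λ^m`: the linear automorphism multiplying the `ℝ^{p+1}`-factor by `λ^m`
and the `ℝ^{q+1}`-factor by `λ^{-m}`. -/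
def Dmap (n p : ℕ) (lam : ℝ) (m : ℤ) (v : EuclideanSpace ℝ (Fin (n + 1))) :
    EuclideanSpace ℝ (Fin (n + 1)) :=
  WithLp.toLp 2 (fun k : Fin (n + 1) => (if (k : ℕ) < p + 1 then lam ^ m else lam ^ (-m)) * v k)

/-- The projectivized action `m • v := D_λ^m v / ‖D_λ^m v‖`. -/
def normAct (n p : ℕ) (lam : ℝ) (m : ℤ) (v : EuclideanSpace ℝ (Fin (n + 1))) :
    EuclideanSpace ℝ (Fin (n + 1)) :=
  ‖Dmap n p lam m v‖⁻¹ • Dmap n p lam m v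

section BlockNormSq

variable {ι : Type*}

def blockNormSq (s : Finset ι) (v : EuclideanSpace ℝ ι) : ℝ := ∑ k ∈ s, v k ^ 2

lemma blockNormSq_pos_iff {s : Finset ι} {v : EuclideanSpace ℝ ι} :
    0 < blockNormSq s v ↔ ∃ k ∈ s, v k ≠ 0 := by
  simp only [blockNormSq, Finset.sum_pos_iff_of_nonneg fun k _ => sq_nonneg (v k), sq_pos_iff]

lemma blockNormSq_of_forall_eq_mul {s : Finset ι} {v w : EuclideanSpace ℝ ι} {c : ℝ}
    (h : ∀ k ∈ s, w k = c * v k) : blockNormSq s w = c ^ 2 * blockNormSq s v := by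
  rw [blockNormSq, blockNormSq, Finset.mul_sum]
  exact Finset.sum_congr rfl fun k hk => by rw [h k hk]; ring

lemma continuous_blockNormSq (s : Finset ι) : Continuous (blockNormSq s) := by
  unfold blockNormSq
  fun_prop

end BlockNormSq

def firstBlock (n p : ℕ) : Finset (Fin (n + 1)) := {k | (k : ℕ) < p + 1}

lemma mem_Omega_iff {n p : ℕ} {v : EuclideanSpace ℝ (Fin (n + 1))} :
    v ∈ Omega n p ↔ ‖v‖ = 1 ∧ 0 < blockNormSq (firstBlock n p) v ∧
      0 < blockNormSq (firstBlock n p)ᶜ v := by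
  simp only [Omega, greatSphereP, greatSphereQ, blockNormSq_pos_iff, firstBlock,
    Finset.mem_compl, Finset.mem_filter_univ, mem_sdiff, mem_union, mem_ofPred_eq, not_or, not_and,
    not_forall, not_lt]
  grind

section Action

variable {n p : ℕ} {lam : ℝ} {m : ℤ} {v : EuclideanSpace ℝ (Fin (n + 1))}

lemma Dmap_apply_of_mem {k : Fin (n + 1)} (hk : k ∈ firstBlock n p) :
    Dmap n p lam m v k = lam ^ m * v k := by
  simp_all [Dmap, firstBlock]

lemma Dmap_apply_of_notMem {k : Fin (n + 1)} (hk : k ∉ firstBlock n p) :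
    Dmap n p lam m v k = lam ^ (-m) * v k := by
  simp_all [Dmap, firstBlock]

lemma Dmap_zero_left : Dmap n p lam 0 v = v := by
  ext k
  simp [Dmap]

lemma Dmap_Dmap (hlam : lam ≠ 0) (m₁ m₂ : ℤ) :
    Dmap n p lam m₁ (Dmap n p lam m₂ v) = Dmap n p lam (m₁ + m₂) v := by
  ext k
  simp only [Dmap, neg_add, zpow_add₀ hlam]
  split_ifs <;> ring

lemma Dmap_smul (c : ℝ) : Dmap n p lam m (c • v) = c • Dmap n p lam m v := by
  ext k
  simp only [Dmap, PiLp.smul_apply, smul_eq_mul]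
  ring

lemma Dmap_zero_right : Dmap n p lam m (0 : EuclideanSpace ℝ (Fin (n + 1))) = 0 := by
  ext k
  simp [Dmap]

lemma Dmap_eq_zero_iff (hlam : lam ≠ 0) : Dmap n p lam m v = 0 ↔ v = 0 := by
  refine ⟨fun h => ?_, fun h => by rw [h, Dmap_zero_right]⟩
  rw [← Dmap_zero_left (p := p) (lam := lam) (v := v), ← neg_add_cancel m, ← Dmap_Dmap hlam,
    h, Dmap_zero_right]

lemma normAct_eq_normalize :
    normAct n p lam m v = NormedSpace.normalize (Dmap n p lam m v) := rfl

lemma normAct_apply_of_mem {k : Fin (n + 1)} (hk : k ∈ firstBlock n p) :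
    normAct n p lam m v k = ‖Dmap n p lam m v‖⁻¹ * lam ^ m * v k := by
  rw [normAct, PiLp.smul_apply, Dmap_apply_of_mem hk, smul_eq_mul, mul_assoc]

lemma normAct_apply_of_notMem {k : Fin (n + 1)} (hk : k ∉ firstBlock n p) :
    normAct n p lam m v k = ‖Dmap n p lam m v‖⁻¹ * lam ^ (-m) * v k := by
  rw [normAct, PiLp.smul_apply, Dmap_apply_of_notMem hk, smul_eq_mul, mul_assoc]

lemma blockNormSq_firstBlock_normAct :
    blockNormSq (firstBlock n p) (normAct n p lam m v) =
      (‖Dmap n p lam m v‖⁻¹ * lam ^ m) ^ 2 * blockNormSq (firstBlock n p) v :=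
  blockNormSq_of_forall_eq_mul fun _ hk => normAct_apply_of_mem hk

lemma blockNormSq_compl_firstBlock_normAct :
    blockNormSq (firstBlock n p)ᶜ (normAct n p lam m v) =
      (‖Dmap n p lam m v‖⁻¹ * lam ^ (-m)) ^ 2 * blockNormSq (firstBlock n p)ᶜ v :=
  blockNormSq_of_forall_eq_mul fun _ hk => normAct_apply_of_notMem (Finset.mem_compl.1 hk)

lemma ne_zero_of_mem_Omega (hv : v ∈ Omega n p) : v ≠ 0 := by
  rintro rfl
  simp [mem_Omega_iff] at hv

lemma normAct_mem_Omega (hlam : lam ≠ 0) (hv : v ∈ Omega n p) :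
    normAct n p lam m v ∈ Omega n p := by
  obtain ⟨-, ha, hb⟩ := mem_Omega_iff.1 hv
  have hD : Dmap n p lam m v ≠ 0 := (Dmap_eq_zero_iff hlam).not.2 (ne_zero_of_mem_Omega hv)
  refine mem_Omega_iff.2 ⟨NormedSpace.norm_normalize hD, ?_, ?_⟩
  · rw [blockNormSq_firstBlock_normAct]
    have := norm_pos_iff.2 hD
    have := zpow_ne_zero m hlam
    positivity
  · rw [blockNormSq_compl_firstBlock_normAct]
    have := norm_pos_iff.2 hD
    have := zpow_ne_zero (-m) hlam
    positivity

lemma normAct_zero_left (hv : ‖v‖ = 1) : normAct n p lam 0 v = v := by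
  rw [normAct_eq_normalize, Dmap_zero_left, NormedSpace.normalize_eq_self_of_norm_eq_one hv]

lemma normAct_add (hlam : lam ≠ 0) (hv : v ≠ 0) (m₁ m₂ : ℤ) :
    normAct n p lam (m₁ + m₂) v = normAct n p lam m₁ (normAct n p lam m₂ v) := by
  have hD : 0 < ‖Dmap n p lam m₂ v‖⁻¹ := by
    simpa [Dmap_eq_zero_iff hlam] using hv
  rw [normAct_eq_normalize, normAct_eq_normalize, normAct, Dmap_smul, Dmap_Dmap hlam,
    NormedSpace.normalize_smul_of_pos hD]

end Action

section Ratio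

variable {n p : ℕ} {lam : ℝ} {m : ℤ} {v : EuclideanSpace ℝ (Fin (n + 1))}

def blockRatio (n p : ℕ) (v : EuclideanSpace ℝ (Fin (n + 1))) : ℝ :=
  blockNormSq (firstBlock n p) v / blockNormSq (firstBlock n p)ᶜ v

lemma blockRatio_pos (hv : v ∈ Omega n p) : 0 < blockRatio n p v :=
  div_pos (mem_Omega_iff.1 hv).2.1 (mem_Omega_iff.1 hv).2.2

lemma blockRatio_normAct (hlam : lam ≠ 0) (hv : v ≠ 0) :
    blockRatio n p (normAct n p lam m v) = lam ^ (4 * m) * blockRatio n p v := by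
  have hc : ‖Dmap n p lam m v‖ ≠ 0 := by simpa [Dmap_eq_zero_iff hlam] using hv
  rw [blockRatio, blockRatio, blockNormSq_firstBlock_normAct,
    blockNormSq_compl_firstBlock_normAct, mul_div_mul_comm, zpow_neg, mul_comm 4 m, zpow_mul]
  congr 1
  field_simp

lemma log_blockRatio_normAct (hlam : 0 < lam) (hv : v ∈ Omega n p) :
    Real.log (blockRatio n p (normAct n p lam m v)) =
      Real.log (blockRatio n p v) + m * (4 * Real.log lam) := by
  rw [blockRatio_normAct hlam.ne' (ne_zero_of_mem_Omega hv),
    Real.log_mul (zpow_ne_zero _ hlam.ne') (blockRatio_pos hv).ne', Real.log_zpow]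
  push_cast
  ring

lemma continuousOn_log_blockRatio :
    ContinuousOn (fun v => Real.log (blockRatio n p v)) (Omega n p) :=
  ((continuous_blockNormSq _).continuousOn.div (continuous_blockNormSq _).continuousOn
    fun _ hv => (mem_Omega_iff.1 hv).2.2.ne').log fun _ hv => (blockRatio_pos hv).ne'

lemma eq_zero_of_normAct_eq_self (hlam₀ : 0 < lam) (hlam₁ : lam ≠ 1) (hv : v ∈ Omega n p)
    (h : normAct n p lam m v = v) : m = 0 := by
  have hshift := log_blockRatio_normAct (m := m) hlam₀ hv
  rw [h, left_eq_add, mul_eq_zero] at hshift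
  have hlog : 4 * Real.log lam ≠ 0 :=
    mul_ne_zero four_ne_zero (Real.log_ne_zero_of_pos_of_ne_one hlam₀ hlam₁)
  exact_mod_cast hshift.resolve_right hlog

end Ratio

lemma finite_setOf_abs_intCast_le (R : ℝ) : {m : ℤ | |(m : ℝ)| ≤ R}.Finite :=
  (isCompact_closedBall (0 : ℤ) R).finite_of_discrete.subset fun m hm => by
    rwa [Metric.mem_closedBall, Int.dist_eq, Int.cast_zero, sub_zero]

theorem finite_setOf_image_inter_nonempty_of_shift {X : Type*} [TopologicalSpace X]
    {Ω K L : Set X} {f : X → ℝ} {g : ℤ → X → X} {c : ℝ} (hf : ContinuousOn f Ω) (hc : c ≠ 0)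
    (hg : ∀ m, ∀ v ∈ Ω, f (g m v) = f v + m * c) (hKΩ : K ⊆ Ω) (hLΩ : L ⊆ Ω)
    (hK : IsCompact K) (hL : IsCompact L) :
    {m : ℤ | (g m '' K ∩ L).Nonempty}.Finite := by
  obtain ⟨CK, hCK⟩ := hK.exists_bound_of_continuousOn (hf.mono hKΩ)
  obtain ⟨CL, hCL⟩ := hL.exists_bound_of_continuousOn (hf.mono hLΩ)
  refine (finite_setOf_abs_intCast_le ((CL + CK) / |c|)).subset ?_
  rintro m ⟨_, ⟨v, hvK, rfl⟩, hwL⟩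
  have hshift : (m : ℝ) * c = f (g m v) - f v := by rw [hg m v (hKΩ hvK)]; ring
  show |(m : ℝ)| ≤ (CL + CK) / |c|
  rw [le_div_iff₀ (abs_pos.2 hc), ← abs_mul, hshift]
  exact (abs_sub _ _).trans (add_le_add (hCL _ hwL) (hCK v hvK))

theorem normAct_wellDefined_free_properlyDiscontinuous
    (p : ℕ) (n : ℕ)
    (lam : ℝ) (hlam : 1 < lam) :
    (∀ (m : ℤ) (v : EuclideanSpace ℝ (Fin (n + 1))), v ∈ Omega n p →
      normAct n p lam m v ∈ Omega n p) ∧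
    (∀ v ∈ Omega n p, normAct n p lam 0 v = v) ∧
    (∀ (m₁ m₂ : ℤ) (v : EuclideanSpace ℝ (Fin (n + 1))), v ∈ Omega n p →
      normAct n p lam (m₁ + m₂) v = normAct n p lam m₁ (normAct n p lam m₂ v)) ∧
    (∀ (m : ℤ) (v : EuclideanSpace ℝ (Fin (n + 1))), v ∈ Omega n p →
      normAct n p lam m v = v → m = 0) ∧
    (∀ K L : Set (EuclideanSpace ℝ (Fin (n + 1))), K ⊆ Omega n p → L ⊆ Omega n p →
      IsCompact K → IsCompact L →
      {m : ℤ | (normAct n p lam m '' K ∩ L).Nonempty}.Finite) := by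
  have hlam₀ : 0 < lam := zero_lt_one.trans hlam
  refine ⟨fun m v hv => normAct_mem_Omega hlam₀.ne' hv,
    fun v hv => normAct_zero_left (mem_Omega_iff.1 hv).1,
    fun m₁ m₂ v hv => normAct_add hlam₀.ne' (ne_zero_of_mem_Omega hv) m₁ m₂,
    fun m v hv h => eq_zero_of_normAct_eq_self hlam₀ hlam.ne' hv h,
    fun K L hKΩ hLΩ hK hL => ?_⟩
  have hlog : 4 * Real.log lam ≠ 0 := (mul_pos four_pos (Real.log_pos hlam)).ne'
  exact finite_setOf_image_inter_nonempty_of_shift continuousOn_log_blockRatio hlog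
    (fun m v hv => log_blockRatio_normAct hlam₀ hv) hKΩ hLΩ hK hL
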